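/- Let K be a field, m ≥ 1 an integer, and R = K[x,y]. Then the integral closure of the ideal (x^m, y^m) in R is exactly the ideal (x, y)^m; that is, an element of R is integral over (x^m, y^m) if and only if it lies in (x, y)^m. -/

import Mathlib

open MvPolynomial

/-- `r` is integral over the ideal `I`: it satisfies an equation
`r^k + c_1 r^(k-1) + ⋯ + c_k = 0` with `c_j ∈ I^j`. -/
def IsIntegralOverIdeal {R : Type*} [CommRing R] (I : Ideal R) (r : R) : Prop :=
  ∃ k : ℕ, 1 ≤ k ∧ ∃ c : ℕ → R, (∀ j ∈ Finset.Icc 1 k, c j ∈ I ^ j) ∧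
    r ^ k + ∑ j ∈ Finset.Icc 1 k, c j * r ^ (k - j) = 0

/-!
Write `I = (x^m, y^m)` and `J = (x, y)`. If `f ∈ J^m`, then `f J^m ⊆ J^(2m) ⊆ I J^m`, because
a monomial of degree `2m` is divisible by `x^m` or by `y^m`; the determinant trick on the
finitely generated faithful module `J^m` makes `f` integral over `I`. Conversely, the order of
vanishing at the origin is a valuation which is at least `m` on `I`. If
`f^k + ∑ c_j f^(k-j) = 0` with `c_j ∈ I^j` and `ord f < m`, then `f^k` has strictly smaller
order than each `c_j f^(k-j)`, which is impossible.
-/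

section IntegralOverIdeal

variable {R : Type*} [CommRing R] {I : Ideal R} {r : R}

theorem IsIntegralOverIdeal.of_monic [Nontrivial R] {p : Polynomial R} (hp : p.Monic)
    (hcoeff : ∀ i, p.coeff i ∈ I ^ (p.natDegree - i)) (hr : p.eval r = 0) :
    IsIntegralOverIdeal I r := by
  have hdeg : 1 ≤ p.natDegree := by
    by_contra! h
    rw [Nat.lt_one_iff, hp.natDegree_eq_zero] at h
    simp [h] at hr
  refine ⟨p.natDegree, hdeg, fun j => p.coeff (p.natDegree - j), fun j hj => ?_, ?_⟩
  · simpa [Nat.sub_sub_self (Finset.mem_Icc.mp hj).2] using hcoeff (p.natDegree - j)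
  · rw [← hr, Polynomial.eval_eq_sum_range, Finset.sum_range_succ, hp.coeff_natDegree, one_mul,
      add_comm]
    congr 1
    refine Finset.sum_nbij' (p.natDegree - ·) (p.natDegree - ·) ?_ ?_ ?_ ?_ fun _ _ => rfl <;>
      intro j hj <;> simp only [Finset.mem_Icc, Finset.mem_range] at hj ⊢ <;> omega

theorem IsIntegralOverIdeal.of_mul_mem_mul [Nontrivial R] {J : Ideal R} (hJ : J.FG)
    (hann : Submodule.annihilator J = ⊥) (h : ∀ a ∈ J, r * a ∈ I * J) :
    IsIntegralOverIdeal I r := by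
  have : Module.Finite R J := Module.Finite.iff_fg.mpr hJ
  obtain ⟨p, hp, -, hcoeff, hzero⟩ :=
    LinearMap.exists_monic_and_natDegree_eq_and_coeff_mem_pow_and_aeval_eq_zero
      R (algebraMap R (Module.End R J) r) I (by
        rintro _ ⟨a, rfl⟩
        rw [Submodule.mem_smul_top_iff, Ideal.smul_eq_mul]
        exact h a a.2)
  refine .of_monic hp hcoeff ?_
  rw [Polynomial.aeval_algebraMap_apply] at hzero
  rw [← Submodule.mem_bot R, ← hann, Submodule.mem_annihilator]
  intro a ha
  simpa using congr(($hzero ⟨a, ha⟩ : R))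

theorem AddValuation.le_apply_of_mem_pow (v : AddValuation R ℕ∞) {n : ℕ}
    (hI : ∀ a ∈ I, (n : ℕ∞) ≤ v a) (j : ℕ) {a : R} (ha : a ∈ I ^ j) :
    ((j * n : ℕ) : ℕ∞) ≤ v a := by
  induction j generalizing a with
  | zero => simp
  | succ j ih =>
    rw [pow_succ] at ha
    refine Submodule.mul_induction_on ha (fun b hb c hc => ?_)
      fun b c hb hc => v.map_le_add hb hc
    rw [v.map_mul, add_mul, Nat.cast_add, one_mul]
    exact add_le_add (ih hb) (hI c hc)

theorem IsIntegralOverIdeal.le_addValuation (hr : IsIntegralOverIdeal I r)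
    (v : AddValuation R ℕ∞) {n : ℕ} (hI : ∀ a ∈ I, (n : ℕ∞) ≤ v a) : (n : ℕ∞) ≤ v r := by
  obtain ⟨k, -, c, hc, heq⟩ := hr
  by_contra! hlt
  obtain ⟨s, hs⟩ := ENat.ne_top_iff_exists.mp (hlt.trans_le le_top).ne
  have hsn : s < n := by rwa [← hs, Nat.cast_lt] at hlt
  have hpow : v (r ^ k) = ((k * s : ℕ) : ℕ∞) := by rw [v.map_pow, ← hs, nsmul_eq_mul, Nat.cast_mul]
  have hterm : ∀ j ∈ Finset.Icc 1 k, ((k * s : ℕ) : ℕ∞) < v (c j * r ^ (k - j)) := by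
    intro j hj
    obtain ⟨hj1, hjk⟩ := Finset.mem_Icc.mp hj
    rw [v.map_mul, v.map_pow, ← hs]
    calc ((k * s : ℕ) : ℕ∞) < ((j * n + (k - j) * s : ℕ) : ℕ∞) := by
          have : j * s < j * n := Nat.mul_lt_mul_of_pos_left hsn hj1
          have : k * s = j * s + (k - j) * s := by rw [← add_mul, Nat.add_sub_cancel' hjk]
          exact_mod_cast (by omega)
      _ ≤ v (c j) + (k - j) • (s : ℕ∞) := by
          push_cast
          exact add_le_add (by exact_mod_cast v.le_apply_of_mem_pow hI j (hc j hj)) le_rfl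
  have := v.map_add_eq_of_lt_left (hpow ▸ v.map_lt_sum (ENat.natCast_ne_top _) hterm)
  rw [heq, v.map_zero, hpow] at this
  exact ENat.natCast_ne_top _ this.symm

end IntegralOverIdeal

namespace MvPowerSeries

variable (σ R : Type*) [CommRing R] [NoZeroDivisors R] [Nontrivial R]

noncomputable def orderAddValuation : AddValuation (MvPowerSeries σ R) ℕ∞ :=
  AddValuation.of order order_zero
    (by simpa using order_monomial_of_ne_zero (σ := σ) (d := 0) (one_ne_zero (α := R)))
    (fun _ _ => min_order_le_add) order_mul

end MvPowerSeries

namespace MvPolynomial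

variable {σ R : Type*} [CommSemiring R]

theorem mem_pow_idealOfVars_iff_le_order {n : ℕ} {p : MvPolynomial σ R} :
    p ∈ idealOfVars σ R ^ n ↔ (n : ℕ∞) ≤ (p : MvPowerSeries σ R).order := by
  rw [mem_pow_idealOfVars_iff']
  refine ⟨fun h => MvPowerSeries.nat_le_order fun d hd => by rw [coeff_coe, h d hd],
    fun h d hd => ?_⟩
  rw [← coeff_coe]
  exact MvPowerSeries.coeff_of_lt_order ((Nat.cast_lt.mpr hd).trans_le h)

theorem monomial_mem_span_X_pow_mul_pow_idealOfVars {i : σ} {m n : ℕ} {d : σ →₀ ℕ}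
    (hi : m ≤ d i) (hd : m + n ≤ d.degree) (c : R) :
    monomial d c ∈ Ideal.span {X i ^ m} * idealOfVars σ R ^ n := by
  obtain ⟨e, rfl⟩ : ∃ e, d = Finsupp.single i m + e :=
    ⟨d - Finsupp.single i m, (add_tsub_cancel_of_le (Finsupp.single_le_iff.mpr hi)).symm⟩
  rw [map_add, Finsupp.degree_single] at hd
  rw [← one_mul c, ← monomial_mul, ← X_pow_eq_monomial]
  refine Ideal.mul_mem_mul (Ideal.mem_span_singleton_self _)
    ((mem_pow_idealOfVars_iff _ _).mpr fun x hx => ?_)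
  rw [Finset.mem_singleton.mp (support_monomial_subset hx)]
  omega

theorem idealOfVars_fin_two : idealOfVars (Fin 2) R = Ideal.span {X 0, X 1} := by
  rw [idealOfVars]
  congr 1
  ext
  simp [Fin.exists_fin_two, eq_comm]

theorem span_X_pow_le_pow_idealOfVars (m : ℕ) :
    Ideal.span {X 0 ^ m, X 1 ^ m} ≤ idealOfVars (Fin 2) R ^ m := by
  rw [Ideal.span_le, Set.insert_subset_iff, Set.singleton_subset_iff]
  exact ⟨Ideal.pow_mem_pow (Ideal.subset_span (Set.mem_range_self 0)) m,
    Ideal.pow_mem_pow (Ideal.subset_span (Set.mem_range_self 1)) m⟩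

theorem pow_idealOfVars_two_mul_le (m : ℕ) :
    idealOfVars (Fin 2) R ^ (2 * m) ≤
      Ideal.span {X 0 ^ m, X 1 ^ m} * idealOfVars (Fin 2) R ^ m := by
  rw [pow_idealOfVars_eq_span, Ideal.span_le]
  rintro _ ⟨d, hd, rfl⟩
  rw [Set.mem_preimage, Set.mem_singleton_iff, Finsupp.degree_eq_sum, Fin.sum_univ_two] at hd
  obtain ⟨i, hi⟩ : ∃ i, m ≤ d i := (le_or_gt m (d 0)).elim (⟨0, ·⟩) fun h => ⟨1, by omega⟩
  refine Ideal.mul_mono_left (Ideal.span_mono ?_)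
    (monomial_mem_span_X_pow_mul_pow_idealOfVars hi ?_ 1)
  · fin_cases i <;> simp
  · rw [Finsupp.degree_eq_sum, Fin.sum_univ_two]; omega

end MvPolynomial

theorem integralClosure_pow_monomial_ideal_general {K : Type*} [Field K] (m : ℕ)
    (f : MvPolynomial (Fin 2) K) :
    IsIntegralOverIdeal
        (Ideal.span {(X 0 ^ m : MvPolynomial (Fin 2) K), X 1 ^ m}) f ↔
      f ∈ Ideal.span {(X 0 : MvPolynomial (Fin 2) K), X 1} ^ m := by
  rw [← idealOfVars_fin_two]
  constructor
  · intro hf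
    rw [mem_pow_idealOfVars_iff_le_order]
    exact hf.le_addValuation ((MvPowerSeries.orderAddValuation (Fin 2) K).comap
      coeToMvPowerSeries.ringHom) fun a ha =>
        mem_pow_idealOfVars_iff_le_order.mp (span_X_pow_le_pow_idealOfVars m ha)
  · intro hf
    have hX : X 0 ^ m ∈ idealOfVars (Fin 2) K ^ m :=
      span_X_pow_le_pow_idealOfVars m (Ideal.subset_span (Set.mem_insert _ _))
    refine .of_mul_mem_mul (J := idealOfVars (Fin 2) K ^ m) (idealOfVars_fg _ _).pow ?_
      fun a ha => ?_
    · refine (Submodule.eq_bot_iff _).mpr fun s hs => ?_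
      exact (mul_eq_zero.mp (Submodule.mem_annihilator.mp hs _ hX)).resolve_right
        (pow_ne_zero _ (X_ne_zero 0))
    · refine pow_idealOfVars_two_mul_le m ?_
      rw [two_mul, pow_add]
      exact Ideal.mul_mem_mul hf ha

/-- In `K[x,y]`, the integral closure of `(x^m, y^m)` is exactly `(x, y)^m`:
an element is integral over `(x^m, y^m)` iff it lies in `(x, y)^m`. -/
theorem integralClosure_pow_monomial_ideal {K : Type*} [Field K] (m : ℕ)
    (hm : 1 ≤ m) (f : MvPolynomial (Fin 2) K) :
    IsIntegralOverIdeal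
        (Ideal.span {(X 0 ^ m : MvPolynomial (Fin 2) K), X 1 ^ m}) f ↔
      f ∈ Ideal.span {(X 0 : MvPolynomial (Fin 2) K), X 1} ^ m :=
  integralClosure_pow_monomial_ideal_general m f
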